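/- arXiv:1308.5435 — 2 statements merged into one kernel-verified Lean document; each statement's English description precedes it below -/
import Mathlib

section
/- Let S be a commutative ring and 𝔞 an ideal of S such that S is 𝔞-adically complete, and fix an integer n ≥ 1. Let φ, ψ ∈ S⟦x⟧ be power series with zero constant term such that the linear coefficient of φ is a unit of S and ψ is a compositional inverse of φ, i.e. ψ∘φ = x. If F ∈ S⟦x⟧ has zero constant term and satisfies property (*) with respect to 𝔞 and n, then the conjugate F' := ψ∘(F∘φ) also satisfies property (*): the coefficients of F' in degrees 1 ≤ i < n lie in 𝔞 and the degree-n coefficient of F' is a unit of S. -/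
open PowerSeries

/-- Substitution of the power series `g` (with zero constant term) into the power
series `f`, i.e. the composite `f ∘ g`.  When the constant coefficient of `g`
vanishes, the degree-`n` coefficient of `f ∘ g` only involves the coefficients of
`f` in degrees `≤ n`, so the following finite sum computes it. -/
noncomputable def PowerSeries.substComp {S : Type*} [CommRing S]
    (g f : PowerSeries S) : PowerSeries S :=
  PowerSeries.mk fun n =>
    ∑ i ∈ Finset.range (n + 1), PowerSeries.coeff i f * PowerSeries.coeff n (g ^ i)

/-! Modulo `𝔞`, property (*) says that `F` is divisible by `X ^ n` with a unit as degree-`n`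
coefficient. If `X ^ a ∣ f` and `X ^ b ∣ g`, then `X ^ (a * b) ∣ f ∘ g` and the degree-`a * b`
coefficient of `f ∘ g` is `f_a * g_b ^ a`; so (*) modulo `𝔞` passes to `ψ ∘ F ∘ φ`, whose
degree-`n` coefficient is `ψ_1 * F_n * φ_1 ^ n`. Since `𝔞` lies in the Jacobson radical of the
complete ring `S`, a unit modulo `𝔞` is a unit. -/

namespace PowerSeries

variable {R S : Type*} [CommRing R] [CommRing S]

theorem coeff_substComp (g f : R⟦X⟧) (m : ℕ) :
    coeff m (substComp g f) = ∑ i ∈ Finset.range (m + 1), coeff i f * coeff m (g ^ i) :=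
  coeff_mk _ _

theorem map_substComp (π : R →+* S) (g f : R⟦X⟧) :
    map π (substComp g f) = substComp (map π g) (map π f) := by
  ext m
  simp only [coeff_map, coeff_substComp, map_sum, map_mul, ← map_pow]

theorem coeff_mul_pow_of_X_pow_dvd {g : R⟦X⟧} {b : ℕ} (hg : X ^ b ∣ g) (a : ℕ) :
    coeff (b * a) (g ^ a) = coeff b g ^ a := by
  obtain ⟨h, rfl⟩ := hg
  simp [mul_pow, ← pow_mul, coeff_X_pow_mul', coeff_zero_eq_constantCoeff]

theorem coeff_pow_eq_zero_of_X_pow_dvd {g : R⟦X⟧} {b : ℕ} (hg : X ^ b ∣ g) {a m : ℕ}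
    (hm : m < b * a) : coeff m (g ^ a) = 0 := by
  have hga : (X : R⟦X⟧) ^ (b * a) ∣ g ^ a := pow_mul (X : R⟦X⟧) b a ▸ pow_dvd_pow_of_dvd hg a
  exact X_pow_dvd_iff.mp hga m hm

theorem X_pow_mul_dvd_substComp {f g : R⟦X⟧} {a b : ℕ} (hf : X ^ a ∣ f) (hg : X ^ b ∣ g) :
    X ^ (a * b) ∣ substComp g f := by
  refine X_pow_dvd_iff.mpr fun m hm => ?_
  rw [coeff_substComp]
  refine Finset.sum_eq_zero fun i hi => ?_
  rcases lt_or_ge i a with hia | hai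
  · rw [X_pow_dvd_iff.mp hf i hia, zero_mul]
  · rw [coeff_pow_eq_zero_of_X_pow_dvd hg (by nlinarith), mul_zero]

theorem coeff_mul_substComp {f g : R⟦X⟧} {a b : ℕ} (hf : X ^ a ∣ f) (hg : X ^ b ∣ g)
    (hb : 1 ≤ b) : coeff (a * b) (substComp g f) = coeff a f * coeff b g ^ a := by
  rw [coeff_substComp, Finset.sum_eq_single_of_mem a (Finset.mem_range.mpr (by nlinarith)),
    mul_comm a b, coeff_mul_pow_of_X_pow_dvd hg]
  intro i _ hia
  rcases lt_or_gt_of_ne hia with hia | hai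
  · rw [X_pow_dvd_iff.mp hf i hia, zero_mul]
  · rw [coeff_pow_eq_zero_of_X_pow_dvd hg (by nlinarith), mul_zero]

theorem X_pow_dvd_map_mk_iff (𝔞 : Ideal R) (F : R⟦X⟧) (n : ℕ) :
    X ^ n ∣ map (Ideal.Quotient.mk 𝔞) F ↔ ∀ i < n, coeff i F ∈ 𝔞 := by
  simp only [X_pow_dvd_iff, coeff_map, Ideal.Quotient.eq_zero_iff_mem]

end PowerSeries

theorem IsAdicComplete.isUnit_of_isUnit_mk {S : Type*} [CommRing S] (𝔞 : Ideal S)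
    [IsAdicComplete 𝔞 S] {x : S}
    (hx : IsUnit (Ideal.Quotient.mk 𝔞 x)) : IsUnit x :=
  haveI := isLocalHom_of_le_jacobson_bot 𝔞 (IsAdicComplete.le_jacobson_bot 𝔞)
  hx.of_map

/-- **Lemma 3.2 (power-series form).**  Over an `𝔞`-adically complete ring,
property (*) (coefficients in degrees `< n` lie in `𝔞`, degree-`n` coefficient a
unit) is preserved by conjugation `F ↦ ψ ∘ (F ∘ φ)` by an invertible power
series `φ` with compositional inverse `ψ`. -/
theorem conj_preserves_star {S : Type*} [CommRing S] (𝔞 : Ideal S)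
    [IsAdicComplete 𝔞 S] (n : ℕ) (hn : 1 ≤ n)
    (φ ψ F : PowerSeries S)
    (hφ0 : PowerSeries.constantCoeff φ = 0)
    (hψ0 : PowerSeries.constantCoeff ψ = 0)
    (hφ1 : IsUnit (PowerSeries.coeff 1 φ))
    (hinv : PowerSeries.substComp φ ψ = PowerSeries.X)
    (hF0 : PowerSeries.constantCoeff F = 0)
    (hFlow : ∀ i, 1 ≤ i → i < n → PowerSeries.coeff i F ∈ 𝔞)
    (hFn : IsUnit (PowerSeries.coeff n F)) :
    (∀ i, 1 ≤ i → i < n →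
        PowerSeries.coeff i (PowerSeries.substComp (PowerSeries.substComp φ F) ψ) ∈ 𝔞) ∧
      IsUnit (PowerSeries.coeff n (PowerSeries.substComp (PowerSeries.substComp φ F) ψ)) := by
  set π := Ideal.Quotient.mk 𝔞
  have hXφ : X ^ 1 ∣ φ := by rwa [pow_one, X_dvd_iff]
  have hXψ : X ^ 1 ∣ ψ := by rwa [pow_one, X_dvd_iff]
  have hXφ' : X ^ 1 ∣ map π φ := by simpa using map_dvd (map π) hXφ
  have hXψ' : X ^ 1 ∣ map π ψ := by simpa using map_dvd (map π) hXψ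
  have hXF : X ^ n ∣ map π F := (X_pow_dvd_map_mk_iff 𝔞 F n).mpr fun i hi => by
    rcases Nat.eq_zero_or_pos i with rfl | hi0
    · simp [hF0]
    · exact hFlow i hi0 hi
  have hψ1 : IsUnit (coeff 1 ψ) := by
    have h := coeff_mul_substComp hXψ hXφ le_rfl
    rw [hinv, coeff_X, if_pos rfl] at h
    exact IsUnit.of_mul_eq_one _ h.symm
  have hXG : X ^ n ∣ substComp (map π φ) (map π F) := by
    simpa using X_pow_mul_dvd_substComp hXF hXφ'
  have hmap : map π (substComp (substComp φ F) ψ) =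
      substComp (substComp (map π φ) (map π F)) (map π ψ) := by
    rw [map_substComp, map_substComp]
  refine ⟨fun i _ hi => (X_pow_dvd_map_mk_iff 𝔞 _ n).mp ?_ i hi, ?_⟩
  · rw [hmap]
    simpa using X_pow_mul_dvd_substComp hXψ' hXG
  · refine IsAdicComplete.isUnit_of_isUnit_mk 𝔞 ?_
    have hcoeff := coeff_mul_substComp hXψ' hXG hn
    rw [one_mul, ← mul_one n, coeff_mul_substComp hXF hXφ' le_rfl,
      mul_one, ← hmap] at hcoeff
    rw [← coeff_map, hcoeff]
    simp only [coeff_map, pow_one]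
    exact (hψ1.map π).mul ((hFn.map π).mul ((hφ1.map π).pow n))
end

section
/- Let k be a finite field. Let A = k⟦x,y⟧ be the formal power series ring in two variables over k, let B be the localization of A away from the element y (i.e. B = y^{-1}A, obtained by inverting y), and let R be the adic completion of B with respect to the ideal of B generated by the image of x. Then R is isomorphic as a commutative ring to k((y))⟦x⟧, the ring of formal power series in x over the field k((y)) of formal Laurent series in y over k. -/
/-!
Write `A = k⟦y⟧` and `K = A[1/y] = k((y))`. The ring map `y⁻¹A⟦x⟧ → K⟦x⟧` induced by `A → K`
is an isomorphism modulo every power of `x`: modulo `x ^ n` a series over `K` agrees with a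
polynomial of degree `< n`, which becomes a polynomial over `A` after multiplication by a power of
`y`; conversely, `y` is a non-zero-divisor, so `A⟦x⟧ → K⟦x⟧` detects divisibility by `x ^ n`.
The adic completions therefore agree, and `K⟦x⟧` is its own `x`-adic completion.
-/

open PowerSeries

theorem Ideal.smul_top_eq_self {R : Type*} [CommRing R] (I : Ideal R) : (I • ⊤ : Ideal R) = I := by
  rw [smul_eq_mul, Ideal.mul_top]

namespace AdicCompletion

variable {R S : Type*} [CommRing R] [CommRing S] {I : Ideal R} {J : Ideal S}
  (φ : R →+* S) (hcomap : ∀ n, (J ^ n).comap φ = I ^ n)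
  (hsurj : ∀ n, Function.Surjective ((Ideal.Quotient.mk (J ^ n)).comp φ))

noncomputable def quotientPowEquiv (n : ℕ) :
    R ⧸ (I ^ n • ⊤ : Ideal R) ≃+* S ⧸ (J ^ n • ⊤ : Ideal S) :=
  (Ideal.quotEquivOfEq (by
      rw [Ideal.smul_top_eq_self, ← RingHom.comap_ker, Ideal.mk_ker, hcomap])).trans
    ((RingHom.quotientKerEquivOfSurjective (hsurj n)).trans
      (Ideal.quotEquivOfEq (Ideal.smul_top_eq_self _).symm))

theorem quotientPowEquiv_mk (n : ℕ) (r : R) :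
    quotientPowEquiv φ hcomap hsurj n (Ideal.Quotient.mk _ r) = Ideal.Quotient.mk _ (φ r) := by
  simp [quotientPowEquiv, RingHom.quotientKerEquivOfSurjective_apply_mk]

theorem transitionMap_quotientPowEquiv {m n : ℕ} (hmn : m ≤ n) (c : R ⧸ (I ^ n • ⊤ : Ideal R)) :
    transitionMap J S hmn (quotientPowEquiv φ hcomap hsurj n c) =
      quotientPowEquiv φ hcomap hsurj m (transitionMap I R hmn c) := by
  obtain ⟨r, rfl⟩ := Ideal.Quotient.mk_surjective c
  simp only [quotientPowEquiv_mk, transitionMap_ideal_mk]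

noncomputable def ringEquivOfComapPowEq : AdicCompletion I R ≃+* AdicCompletion J S where
  toFun f := ⟨fun n => quotientPowEquiv φ hcomap hsurj n (f.val n), fun hmn => by
    rw [transitionMap_quotientPowEquiv, f.property hmn]⟩
  invFun g := ⟨fun n => (quotientPowEquiv φ hcomap hsurj n).symm (g.val n), fun {m n} hmn => by
    apply (quotientPowEquiv φ hcomap hsurj m).injective
    rw [← transitionMap_quotientPowEquiv, RingEquiv.apply_symm_apply, RingEquiv.apply_symm_apply,
      g.property hmn]⟩
  left_inv f := Subtype.ext <| funext fun n => RingEquiv.symm_apply_apply _ _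
  right_inv g := Subtype.ext <| funext fun n => RingEquiv.apply_symm_apply _ _
  map_mul' f g := Subtype.ext <| funext fun n => map_mul _ _ _
  map_add' f g := Subtype.ext <| funext fun n => map_add _ _ _

end AdicCompletion

namespace PowerSeries

section

variable {A K : Type*} [CommRing A] [CommRing K]

theorem X_pow_dvd_map_iff {f : A →+* K} (hf : Function.Injective f) {n : ℕ} {p : A⟦X⟧} :
    X ^ n ∣ map f p ↔ X ^ n ∣ p := by
  simp only [X_pow_dvd_iff, coeff_map, map_eq_zero_iff f hf]

theorem X_pow_dvd_sub_trunc (n : ℕ) (p : A⟦X⟧) : X ^ n ∣ p - (trunc n p : A⟦X⟧) :=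
  ⟨_, sub_eq_iff_eq_add.mpr (eq_X_pow_mul_shift_add_trunc n p)⟩

end

variable {A K B : Type*} [CommRing A] [CommRing K] [CommRing B] [Algebra A K] [Algebra A⟦X⟧ B]
  (y : A) [IsLocalization.Away y K] [IsLocalization.Away (C y) B]

theorem isUnit_map_C : IsUnit (map (algebraMap A K) (C y)) := by
  rw [map_C]
  exact (IsLocalization.Away.algebraMap_isUnit y).map C

noncomputable def liftAwayC : B →+* K⟦X⟧ :=
  IsLocalization.Away.lift (C y) (isUnit_map_C (K := K) y)

theorem liftAwayC_algebraMap (a : A⟦X⟧) :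
    liftAwayC (K := K) (B := B) y (algebraMap _ B a) = map (algebraMap A K) a :=
  IsLocalization.Away.lift_eq _ _ a

theorem comap_liftAwayC_span_X_pow (hy : y ∈ nonZeroDivisors A) (n : ℕ) :
    ((Ideal.span {X} : Ideal K⟦X⟧) ^ n).comap (liftAwayC (B := B) y) =
      Ideal.span {algebraMap A⟦X⟧ B X} ^ n := by
  refine le_antisymm (fun b hb => ?_) ?_
  · obtain ⟨⟨a, d⟩, hb_eq⟩ := IsLocalization.surj (Submonoid.powers (C y)) b
    have hd : IsUnit (algebraMap _ B (d : A⟦X⟧)) := IsLocalization.map_units B d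
    have hinj : Function.Injective (algebraMap A K) :=
      IsLocalization.injective K (Submonoid.powers_le.mpr hy)
    rw [Ideal.mem_comap, Ideal.span_singleton_pow, Ideal.mem_span_singleton] at hb
    rw [Ideal.span_singleton_pow, Ideal.mem_span_singleton, ← hd.dvd_mul_right, hb_eq, ← map_pow]
    have hXa : X ^ n ∣ map (algebraMap A K) a := by
      rw [← liftAwayC_algebraMap (B := B) y, ← hb_eq, map_mul]
      exact dvd_mul_of_dvd_left hb _
    exact map_dvd _ ((X_pow_dvd_map_iff hinj).mp hXa)
  · rw [← Ideal.map_le_iff_le_comap, Ideal.map_pow, Ideal.map_span, Set.image_singleton,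
      liftAwayC_algebraMap y, map_X]

theorem liftAwayC_surjective_mod_X_pow (n : ℕ) :
    Function.Surjective
      ((Ideal.Quotient.mk ((Ideal.span {X} : Ideal K⟦X⟧) ^ n)).comp (liftAwayC (B := B) y)) := by
  intro s'
  obtain ⟨s, rfl⟩ := Ideal.Quotient.mk_surjective s'
  obtain ⟨d, hd, hq⟩ := IsLocalization.integerNormalization_spec (Submonoid.powers y) (trunc n s)
  set q := IsLocalization.integerNormalization (Submonoid.powers y) (trunc n s)
  have hCd : C d ∈ Submonoid.powers (C y) := by
    obtain ⟨m, rfl⟩ := hd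
    exact ⟨m, (map_pow C y m).symm⟩
  have hunit : IsUnit (map (algebraMap A K) (C d)) := by
    rw [map_C]
    exact (IsLocalization.map_units K ⟨d, hd⟩).map C
  have hlift : liftAwayC y (IsLocalization.mk' B (q : A⟦X⟧) ⟨C d, hCd⟩) = (trunc n s : K⟦X⟧) := by
    apply hunit.mul_right_cancel
    rw [← liftAwayC_algebraMap (B := B) y, ← map_mul, IsLocalization.mk'_spec,
      liftAwayC_algebraMap y, ← Polynomial.polynomial_map_coe, hq, liftAwayC_algebraMap y, map_C,
      Algebra.smul_def, Polynomial.algebraMap_apply, Polynomial.coe_mul, Polynomial.coe_C,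
      mul_comm]
  refine ⟨IsLocalization.mk' B (q : A⟦X⟧) ⟨C d, hCd⟩, ?_⟩
  rw [RingHom.comp_apply, hlift, Ideal.Quotient.eq, Ideal.span_singleton_pow,
    Ideal.mem_span_singleton, ← dvd_neg, neg_sub]
  exact X_pow_dvd_sub_trunc n s

noncomputable def adicCompletionAwayCEquiv (hy : y ∈ nonZeroDivisors A) :
    AdicCompletion (Ideal.span {algebraMap A⟦X⟧ B X}) B ≃+* K⟦X⟧ :=
  (AdicCompletion.ringEquivOfComapPowEq (liftAwayC y) (comap_liftAwayC_span_X_pow (K := K) y hy)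
      (liftAwayC_surjective_mod_X_pow (K := K) y)).trans
    (AdicCompletion.ofAlgEquiv (Ideal.span {X})).symm.toRingEquiv

end PowerSeries

theorem completion_of_localized_powerSeries_iso_laurent_general (k : Type*) [Field k] :
    Nonempty
      (AdicCompletion
          (Ideal.span
            {algebraMap (PowerSeries (PowerSeries k))
              (Localization.Away
                ((PowerSeries.C (R := PowerSeries k)) (PowerSeries.X : PowerSeries k)))
              (PowerSeries.X : PowerSeries (PowerSeries k))})
          (Localization.Away
            ((PowerSeries.C (R := PowerSeries k)) (PowerSeries.X : PowerSeries k))) ≃+*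
        PowerSeries (LaurentSeries k)) :=
  ⟨PowerSeries.adicCompletionAwayCEquiv (K := LaurentSeries k) PowerSeries.X
    (mem_nonZeroDivisors_of_ne_zero PowerSeries.X_ne_zero)⟩

/-- Section 2.3 of the paper: for a finite field `k`, the completion of
`y⁻¹ k⟦x,y⟧` at the ideal `(x)` is isomorphic to `k((y))⟦x⟧`.

Here `k⟦x,y⟧` is realized as `PowerSeries (PowerSeries k)` with inner variable
`y` (embedded via the constant-coefficient map `C`) and outer variable `x`. -/
theorem completion_of_localized_powerSeries_iso_laurent (k : Type*) [Field k] [Fintype k] :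
    Nonempty
      (AdicCompletion
          (Ideal.span
            {algebraMap (PowerSeries (PowerSeries k))
              (Localization.Away
                ((PowerSeries.C (R := PowerSeries k)) (PowerSeries.X : PowerSeries k)))
              (PowerSeries.X : PowerSeries (PowerSeries k))})
          (Localization.Away
            ((PowerSeries.C (R := PowerSeries k)) (PowerSeries.X : PowerSeries k))) ≃+*
        PowerSeries (LaurentSeries k)) :=
  completion_of_localized_powerSeries_iso_laurent_general k
end
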